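/- Let (W₁, W₂) and (W₁', W₂') be such that diag(W₂)W₁ = diag(W₂')W₁' and sign((W₂)ᵢ) = sign((W₂')ᵢ) ≠ 0 for every i. Then there exists a continuous path γ : [0,1] → ℝ^{d₁×d₀} × ℝ^{1×d₁} with γ(0) = (W₁, W₂), γ(1) = (W₁', W₂'), such that diag(γ₂(t))·γ₁(t) = diag(W₂)W₁ for all t ∈ [0,1] and sign of each entry of γ₂(t) is constant along the path. -/
import Mathlib

lemma sign_combo (a b t : ℝ) (ha : a ≠ 0) (hs : Real.sign a = Real.sign b)
    (ht0 : 0 ≤ t) (ht1 : t ≤ 1) :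
    Real.sign ((1 - t) * a + t * b) = Real.sign a := by
  rcases lt_or_gt_of_ne ha with hneg | hpos
  · have hb : b < 0 := by
      by_contra h
      push_neg at h
      rcases eq_or_lt_of_le h with h' | h'
      · rw [Real.sign_of_neg hneg, ← h', Real.sign_zero] at hs; norm_num at hs
      · rw [Real.sign_of_neg hneg, Real.sign_of_pos h'] at hs; norm_num at hs
    refine (Real.sign_of_neg ?_).trans (Real.sign_of_neg hneg).symm
    rcases lt_or_eq_of_le ht1 with h | h
    · nlinarith [mul_nonpos_of_nonneg_of_nonpos ht0 hb.le]
    · subst h; simpa using hb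
  · have hb : 0 < b := by
      by_contra h
      push_neg at h
      rcases eq_or_lt_of_le h with h' | h'
      · rw [Real.sign_of_pos hpos, h', Real.sign_zero] at hs; norm_num at hs
      · rw [Real.sign_of_pos hpos, Real.sign_of_neg h'] at hs; norm_num at hs
    refine (Real.sign_of_pos ?_).trans (Real.sign_of_pos hpos).symm
    rcases lt_or_eq_of_le ht1 with h | h
    · nlinarith [mul_nonneg ht0 hb.le]
    · subst h; simpa using hb

theorem connected_by_risk_invariant_path (d₁ d₀ : ℕ)
    (W₁ W₁' : Matrix (Fin d₁) (Fin d₀) ℝ) (W₂ W₂' : Fin d₁ → ℝ)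
    (hnz : ∀ i, W₂ i ≠ 0) (hnz' : ∀ i, W₂' i ≠ 0)
    (hsign : ∀ i, Real.sign (W₂ i) = Real.sign (W₂' i))
    (heq : Matrix.diagonal W₂ * W₁ = Matrix.diagonal W₂' * W₁') :
    ∃ γ : ℝ → Matrix (Fin d₁) (Fin d₀) ℝ × (Fin d₁ → ℝ),
      ContinuousOn γ (Set.Icc 0 1) ∧ γ 0 = (W₁, W₂) ∧ γ 1 = (W₁', W₂') ∧
      ∀ t ∈ Set.Icc (0 : ℝ) 1,
        Matrix.diagonal (γ t).2 * (γ t).1 = Matrix.diagonal W₂ * W₁ ∧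
        ∀ i, Real.sign ((γ t).2 i) = Real.sign (W₂ i) := by
  -- interpolated second layer
  set w : ℝ → Fin d₁ → ℝ := fun t i => (1 - t) * W₂ i + t * W₂' i with hw
  have hwsign : ∀ t ∈ Set.Icc (0:ℝ) 1, ∀ i, Real.sign (w t i) = Real.sign (W₂ i) := by
    intro t ht i
    exact sign_combo _ _ _ (hnz i) (hsign i) ht.1 ht.2
  have hwnz : ∀ t ∈ Set.Icc (0:ℝ) 1, ∀ i, w t i ≠ 0 := by
    intro t ht i h
    have := hwsign t ht i
    rw [h, Real.sign_zero] at this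
    exact hnz i (Real.sign_eq_zero_iff.mp this.symm)
  have heqentry : ∀ i j, W₂ i * W₁ i j = W₂' i * W₁' i j := by
    intro i j
    have := congrFun (congrFun heq i) j
    simpa [Matrix.diagonal_mul] using this
  refine ⟨fun t => (Matrix.of fun i j => (W₂ i * W₁ i j) / w t i, w t), ?_, ?_, ?_, ?_⟩
  · refine ContinuousOn.prodMk ?_ ?_
    · apply continuousOn_pi.mpr; intro i
      apply continuousOn_pi.mpr; intro j
      exact ContinuousOn.div continuousOn_const
        (by fun_prop) (fun t ht => hwnz t ht i)
    · apply continuousOn_pi.mpr; intro i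
      fun_prop
  · have : w 0 = W₂ := by funext i; simp [hw]
    refine Prod.ext ?_ (by simpa using this)
    ext i j
    show W₂ i * W₁ i j / w 0 i = W₁ i j
    rw [this, mul_comm (W₂ i), mul_div_assoc, div_self (hnz i), mul_one]
  · have : w 1 = W₂' := by funext i; simp [hw]
    refine Prod.ext ?_ (by simpa using this)
    ext i j
    simp only [Matrix.of_apply, this, heqentry i j]
    rw [mul_comm, mul_div_assoc, div_self (hnz' i), mul_one]
  · intro t ht
    refine ⟨?_, fun i => hwsign t ht i⟩
    ext i j
    simp [Matrix.diagonal_mul, Matrix.of_apply,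
      mul_div_cancel₀ _ (hwnz t ht i)]
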